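/- arXiv:2303.14446 — 11 statements merged into one kernel-verified Lean document; each statement's English description precedes it below -/
import Mathlib

section
/- Equivalently (contrapositive form): if the abstraction abs(Ψ, V') of a DQBF Ψ with respect to a set V' of universal variables is unsatisfiable, then Ψ is unsatisfiable. -/
/- Formalization of DQBF (dependency quantified Boolean formulas),
   Skolem-function semantics, abstraction, and clause operations. -/

attribute [local instance] Classical.propDecidable

namespace DQBFPaper

/-- An assignment of Boolean values to the variables. -/
abbrev Assignment (V : Type) := V → Bool

/-- A DQBF over variables `V`: the variables in `exVars` are existential
    (with dependency sets given by `dep`), the others are universal;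
    `matrix` is the quantifier-free part. -/
structure DQBF (V : Type) where
  exVars : Set V
  dep : V → Set V
  matrix : Assignment V → Prop

/-- A literal: a variable together with a polarity (`true` = positive). -/
abbrev Lit (V : Type) := V × Bool

/-- Evaluation of a literal under an assignment. -/
def Lit.eval {V : Type} (a : Assignment V) (l : Lit V) : Bool :=
  if l.2 then a l.1 else !a l.1

/-- Negation of a literal. -/
def Lit.neg {V : Type} (l : Lit V) : Lit V := (l.1, !l.2)

/-- A clause: a set of literals (interpreted disjunctively). -/
abbrev Clause (V : Type) := Set (Lit V)

/-- A clause is true iff some literal in it is true. -/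
def Clause.eval {V : Type} (a : Assignment V) (C : Clause V) : Prop :=
  ∃ l ∈ C, Lit.eval a l = true

/-- A clause is non-tautological if no variable occurs with both polarities. -/
def NonTaut {V : Type} (C : Clause V) : Prop :=
  ∀ v : V, ¬((v, true) ∈ C ∧ (v, false) ∈ C)

namespace DQBF

variable {V : Type}

/-- The universal variables of a DQBF. -/
def univVars (Ψ : DQBF V) : Set V := Ψ.exVarsᶜ

/-- Well-formedness: dependency sets of existential variables consist of
    universal variables only. -/
def WellFormed (Ψ : DQBF V) : Prop :=
  ∀ y ∈ Ψ.exVars, Ψ.dep y ⊆ Ψ.exVarsᶜ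

/-- Substituting candidate Skolem functions `s` for the existential variables,
    given an assignment `a` of the universal variables. -/
noncomputable def subst (Ψ : DQBF V) (s : V → Assignment V → Bool)
    (a : Assignment V) : Assignment V :=
  fun v => if v ∈ Ψ.exVars then s v a else a v

/-- `s` respects the dependency sets: the value of each existential variable
    only depends on the assignment of its dependency set. -/
def Respects (Ψ : DQBF V) (s : V → Assignment V → Bool) : Prop :=
  ∀ y ∈ Ψ.exVars, ∀ a b : Assignment V, (∀ x ∈ Ψ.dep y, a x = b x) → s y a = s y b

/-- `s` is a Skolem function for `Ψ`: it respects the dependencies and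
    substituting it turns the matrix into a tautology. -/
def IsSkolem (Ψ : DQBF V) (s : V → Assignment V → Bool) : Prop :=
  Ψ.Respects s ∧ ∀ a : Assignment V, Ψ.matrix (Ψ.subst s a)

/-- A DQBF is satisfiable iff it has a Skolem function. -/
def Satisfiable (Ψ : DQBF V) : Prop := ∃ s, Ψ.IsSkolem s

/-- Two DQBFs (over the same prefix) are equivalent iff they have exactly the
    same Skolem functions. -/
def Equivalent (Ψ₁ Ψ₂ : DQBF V) : Prop := ∀ s, Ψ₁.IsSkolem s ↔ Ψ₂.IsSkolem s

/-- Equi-satisfiability. -/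
def EquiSat (Ψ₁ Ψ₂ : DQBF V) : Prop := Ψ₁.Satisfiable ↔ Ψ₂.Satisfiable

/-- Abstraction w.r.t. a set `V'` of universal variables: each variable of `V'`
    becomes existential with empty dependency set (and is removed from all
    dependency sets); the matrix is unchanged. -/
noncomputable def abst (Ψ : DQBF V) (V' : Set V) : DQBF V where
  exVars := Ψ.exVars ∪ V'
  dep := fun v => if v ∈ V' then ∅ else Ψ.dep v \ V'
  matrix := Ψ.matrix

/-- Conjoin a clause to the matrix. -/
def addClause (Ψ : DQBF V) (C : Clause V) : DQBF V :=
  { Ψ with matrix := fun a => Ψ.matrix a ∧ Clause.eval a C }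

/-- Conjoin the negation of a clause (i.e. the unit clauses negating each of
    its literals) to the matrix. -/
def addNegClause (Ψ : DQBF V) (C : Clause V) : DQBF V :=
  { Ψ with matrix := fun a => Ψ.matrix a ∧ ∀ l ∈ C, Lit.eval a l = false }

/-- Generalized dependencies: `dep v = {v}` for universal `v`,
    `dep v = D_v` for existential `v`. -/
noncomputable def depVar (Ψ : DQBF V) (v : V) : Set V :=
  if v ∈ Ψ.exVars then Ψ.dep v else {v}

/-- Dependencies of a literal. -/
noncomputable def depLit (Ψ : DQBF V) (l : Lit V) : Set V := Ψ.depVar l.1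

/-- Dependencies of a clause. -/
noncomputable def depClause (Ψ : DQBF V) (C : Clause V) : Set V :=
  ⋃ l ∈ C, Ψ.depLit l

/-- Under the Skolem candidate `s`, the literal `l` is constantly true,
    i.e. true for every assignment of the universal variables. -/
noncomputable def ConstTrue (Ψ : DQBF V) (s : V → Assignment V → Bool)
    (l : Lit V) : Prop :=
  ∀ a : Assignment V, Lit.eval (Ψ.subst s a) l = true

/-- A DQBF with a CNF matrix given by a set of clauses. -/
def mkCNF (exVars : Set V) (dep : V → Set V) (φ : Set (Clause V)) : DQBF V :=
  ⟨exVars, dep, fun a => ∀ C ∈ φ, Clause.eval a C⟩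

/-- Universal reduction of a clause: remove every universal literal on which
    no existential literal of the clause depends. -/
def urClause (Ψ : DQBF V) (C : Clause V) : Clause V :=
  C \ {l | l.1 ∉ Ψ.exVars ∧ ∀ k ∈ C, k.1 ∈ Ψ.exVars → l.1 ∉ Ψ.dep k.1}

/-- Outer variables of an existential variable `v`. -/
noncomputable def ovEx (Ψ : DQBF V) (v : V) : Set V :=
  {w | Ψ.depVar w ⊆ Ψ.depVar v}

/-- The kernel of a universal variable `v`. -/
def kernel (Ψ : DQBF V) (v : V) : Set V :=
  ⋂ y ∈ {y | y ∈ Ψ.exVars ∧ v ∈ Ψ.dep y}, Ψ.dep y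

/-- Outer variables of a universal variable `v`. -/
def ovUniv (Ψ : DQBF V) (v : V) : Set V :=
  Ψ.kernel v ∪ {y | y ∈ Ψ.exVars ∧ v ∉ Ψ.dep y ∧ Ψ.dep y ⊆ Ψ.kernel v}

/-- The outer clause of `D` w.r.t. a set of outer variables. -/
def OC (D : Clause V) (OV : Set V) : Clause V := {k ∈ D | k.1 ∈ OV}

/-- Outer resolvent for an existential pivot literal `l ∈ C`. -/
noncomputable def orEx (Ψ : DQBF V) (C D : Clause V) (l : Lit V) : Clause V :=
  C ∪ (OC D (Ψ.ovEx l.1) \ {Lit.neg l})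

/-- Outer resolvent for a universal pivot literal `l ∈ C`. -/
def orUniv (Ψ : DQBF V) (C D : Clause V) (l : Lit V) : Clause V :=
  (C \ {l}) ∪ OC D (Ψ.ovUniv l.1)

/-- Outer resolvent (case split on the quantifier type of the pivot). -/
noncomputable def orRes (Ψ : DQBF V) (C D : Clause V) (l : Lit V) : Clause V :=
  if l.1 ∈ Ψ.exVars then Ψ.orEx C D l else Ψ.orUniv C D l

end DQBF

end DQBFPaper

namespace DQBFPaper
open DQBF

/-- If the abstraction `abs(Ψ, V')` w.r.t. a set `V'` of universal
variables is unsatisfiable, then `Ψ` is unsatisfiable. -/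
theorem unsat_of_abst_unsat {V : Type} (Ψ : DQBF V) (V' : Set V)
    (hV' : V' ⊆ Ψ.univVars) (h : ¬ (Ψ.abst V').Satisfiable) :
    ¬ Ψ.Satisfiable := by
  intro ⟨s, hresp, hmat⟩
  apply h
  -- override assignments on V' with `false`
  set f : Assignment V → Assignment V :=
    fun a v => if v ∈ V' then false else a v with hf
  refine ⟨fun v a => if v ∈ V' then false else s v (f a), ?_, ?_⟩
  · intro y hy a b hab
    rcases Set.mem_union _ _ _ |>.mp hy with hyx | hyV
    · have hyV : y ∉ V' := fun hv => (hV' hv) hyx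
      simp only [hyV, if_false]
      apply hresp y hyx
      intro x hx
      by_cases hxV : x ∈ V'
      · simp [hf, hxV]
      · have : x ∈ (Ψ.abst V').dep y := by
          simp [DQBF.abst, hyV, hx, hxV]
        simpa [hf, hxV] using hab x this
    · simp [hyV]
  · intro a
    have key : (Ψ.abst V').subst (fun v a => if v ∈ V' then false else s v (f a))
        a = Ψ.subst s (f a) := by
      funext v
      simp only [DQBF.subst, DQBF.abst, Set.mem_union]
      by_cases hvV : v ∈ V'
      · have hvx : v ∉ Ψ.exVars := hV' hvV
        simp [hvV, hvx, hf]
      · by_cases hvx : v ∈ Ψ.exVars <;> simp [hvV, hvx, hf]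
    show Ψ.matrix _
    rw [key]
    exact hmat (f a)

end DQBFPaper
end

section
/- Let Ψ₁ = Π : φ₁ and Ψ₂ = Π : φ₂ be two DQBFs with identical prefixes Π and let V' be a subset of the universal variables of Π. If abs(Ψ₁, V') and abs(Ψ₂, V') are equivalent (have exactly the same Skolem functions), then Ψ₁ and Ψ₂ are equivalent. -/
/- Formalization of DQBF (dependency quantified Boolean formulas),
   Skolem-function semantics, abstraction, and clause operations. -/

attribute [local instance] Classical.propDecidable

namespace DQBFPaper
open DQBF

theorem skolem_of_abst_skolem_aux {V : Type} (Ψ₁ Ψ₂ : DQBF V)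
    (hex : Ψ₁.exVars = Ψ₂.exVars) (hdep : Ψ₁.dep = Ψ₂.dep)
    (V' : Set V) (hV' : V' ⊆ Ψ₁.univVars)
    (h : ∀ s', (Ψ₁.abst V').IsSkolem s' → (Ψ₂.abst V').IsSkolem s')
    (s : V → Assignment V → Bool) (hs : Ψ₁.IsSkolem s) : Ψ₂.IsSkolem s := by
  obtain ⟨hresp, hmat⟩ := hs
  have hdisj : ∀ v ∈ V', v ∉ Ψ₁.exVars := fun v hv => hV' hv
  constructor
  · intro y hy a b hab
    exact hresp y (hex ▸ hy) a b (by rw [hdep]; exact hab)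
  · intro a
    set patch : Assignment V → Assignment V :=
      fun b x => if x ∈ V' then a x else b x with hpatch
    set s' : V → Assignment V → Bool :=
      fun v b => if v ∈ V' then a v else s v (patch b) with hs'
    have hsk1 : (Ψ₁.abst V').IsSkolem s' := by
      constructor
      · intro y hy b c hbc
        by_cases hyV : y ∈ V'
        · simp [hs', hyV]
        · have hyex : y ∈ Ψ₁.exVars := by
            rcases hy with hy | hy
            · exact hy
            · exact absurd hy hyV
          simp only [hs', if_neg hyV]
          apply hresp y hyex
          intro x hx
          by_cases hxV : x ∈ V'
          · simp [hpatch, hxV]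
          · simp only [hpatch, if_neg hxV]
            apply hbc
            simp only [DQBF.abst, if_neg hyV]
            exact ⟨hx, hxV⟩
      · intro b
        have heq : (Ψ₁.abst V').subst s' b = Ψ₁.subst s (patch b) := by
          funext v
          by_cases hvex : v ∈ Ψ₁.exVars
          · have hvV : v ∉ V' := fun hv => hdisj v hv hvex
            simp [DQBF.subst, DQBF.abst, hvex, hs', hvV]
          · by_cases hvV : v ∈ V' <;>
              simp [DQBF.subst, DQBF.abst, hvex, hvV, hs', hpatch]
        show Ψ₁.matrix _
        rw [show (Ψ₁.abst V').subst s' b = Ψ₁.subst s (patch b) from heq]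
        exact hmat _
    have hsk2 := (h s' hsk1).2 a
    have heq : (Ψ₂.abst V').subst s' a = Ψ₂.subst s a := by
      funext v
      by_cases hvex : v ∈ Ψ₂.exVars
      · have hvV : v ∉ V' := fun hv => hdisj v hv (hex ▸ hvex)
        have hp : patch a = a := by
          funext x; by_cases hx : x ∈ V' <;> simp [hpatch, hx]
        simp [DQBF.subst, DQBF.abst, hvex, hs', hvV, hp]
      · by_cases hvV : v ∈ V' <;>
          simp [DQBF.subst, DQBF.abst, hvex, hvV, hs', hpatch]
    have : Ψ₂.matrix ((Ψ₂.abst V').subst s' a) := hsk2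
    rwa [heq] at this

/-- For two DQBFs with identical prefixes and a subset `V'` of the
universal variables, if the abstractions `abs(Ψ₁,V')` and `abs(Ψ₂,V')` are
equivalent, then `Ψ₁` and `Ψ₂` are equivalent. -/
theorem equiv_of_abst_equiv {V : Type} (Ψ₁ Ψ₂ : DQBF V)
    (hex : Ψ₁.exVars = Ψ₂.exVars) (hdep : Ψ₁.dep = Ψ₂.dep)
    (V' : Set V) (hV' : V' ⊆ Ψ₁.univVars)
    (h : (Ψ₁.abst V').Equivalent (Ψ₂.abst V')) :
    Ψ₁.Equivalent Ψ₂ := by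
  intro s
  constructor
  · exact skolem_of_abst_skolem_aux Ψ₁ Ψ₂ hex hdep V' hV'
      (fun s' hs' => (h s').mp hs') s
  · exact skolem_of_abst_skolem_aux Ψ₂ Ψ₁ hex.symm hdep.symm V'
      (by rw [DQBF.univVars, ← hex]; exact hV')
      (fun s' hs' => (h s').mpr hs') s

end DQBFPaper
end

section
/- Equivalence of two DQBFs does not imply equivalence of their abstractions: there exist DQBFs Ψ₁ and Ψ₂ over the same prefix with Ψ₁ ≡ Ψ₂, and a set V' of universal variables, such that abs(Ψ₁, V') ≢ abs(Ψ₂, V'). Concretely, Ψ₁ = ∀x ∃y(∅) : (x ∧ y) and Ψ₂ = ∀x ∃y(∅) : (x ∧ y) ∧ ¬x are both unsatisfiable (hence equivalent, having no Skolem functions), but abs(Ψ₁, {x}) = ∃x(∅)∃y(∅) : x ∧ y is satisfiable while abs(Ψ₂, {x}) is unsatisfiable. -/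
/- Formalization of DQBF (dependency quantified Boolean formulas),
   Skolem-function semantics, abstraction, and clause operations. -/

attribute [local instance] Classical.propDecidable

namespace DQBFPaper
open DQBF

/-- Equivalence of DQBFs does not imply equivalence of their
abstractions: `Ψ₁ = ∀x ∃y(∅) : (x ∧ y)` and `Ψ₂ = ∀x ∃y(∅) : (x ∧ y) ∧ ¬x`
are both unsatisfiable (hence equivalent), but `abs(Ψ₁,{x})` is satisfiable
while `abs(Ψ₂,{x})` is not; in particular the abstractions are inequivalent. -/
theorem equiv_not_implies_abst_equiv :
    let x : Bool := false
    let y : Bool := true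
    let Ψ₁ : DQBF Bool := ⟨{y}, fun _ => ∅, fun a => a x = true ∧ a y = true⟩
    let Ψ₂ : DQBF Bool :=
      ⟨{y}, fun _ => ∅, fun a => (a x = true ∧ a y = true) ∧ a x = false⟩
    ¬ Ψ₁.Satisfiable ∧ ¬ Ψ₂.Satisfiable ∧ Ψ₁.Equivalent Ψ₂ ∧
    (Ψ₁.abst {x}).Satisfiable ∧ ¬ (Ψ₂.abst {x}).Satisfiable ∧
    ¬ (Ψ₁.abst {x}).Equivalent (Ψ₂.abst {x}) := by
  intro x y Ψ₁ Ψ₂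
  have hx : x = false := rfl
  have hy : y = true := rfl
  have h1 : ¬ Ψ₁.Satisfiable := by
    rintro ⟨s, -, hs⟩
    have := (hs (fun _ => false)).1
    simp [DQBF.subst, Ψ₁, x] at this
  have h2 : ¬ Ψ₂.Satisfiable := by
    rintro ⟨s, -, hs⟩
    have h := hs (fun _ => false)
    have h1 := h.1.1
    have h2 := h.2
    simp [DQBF.subst, Ψ₂, x] at h1
  have hsk : IsSkolem (Ψ₁.abst {x}) (fun _ _ => true) := by
    constructor
    · intro _ _ _ _ _; rfl
    · intro a
      have hmem : ∀ v : Bool, v ∈ (Ψ₁.abst {x}).exVars := by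
        intro v
        cases v <;> simp [DQBF.abst, Ψ₁, x, y, Set.mem_union]
      constructor <;>
        simp [DQBF.subst, hmem, DQBF.abst, Ψ₁]
  refine ⟨h1, h2, ?_, ⟨_, hsk⟩, ?_, ?_⟩
  · intro s
    constructor
    · intro h; exact absurd ⟨s, h⟩ h1
    · intro h; exact absurd ⟨s, h⟩ h2
  · rintro ⟨s, -, hs⟩
    have h := hs (fun _ => false)
    have ha := h.1.1
    have hb := h.2
    have : (Ψ₂.abst {x}).subst s (fun _ => false) x = (Ψ₂.abst {x}).subst s (fun _ => false) x := rfl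
    rw [ha] at hb
    exact Bool.true_eq_false_eq_False hb
  · intro hEq
    have h := (hEq (fun _ _ => true)).mp hsk
    have hh := h.2 (fun _ => false)
    have ha := hh.1.1
    have hb := hh.2
    rw [ha] at hb
    exact Bool.true_eq_false_eq_False hb


end DQBFPaper
end

section
/- Universal reduction preserves equivalence: for any DQBF Ψ = Π : φ with matrix in CNF (all clauses non-tautological), the DQBF UR(Ψ), obtained by removing from each clause C every universal literal ℓ such that no existential literal k ∈ C has var(ℓ) ∈ D_{var(k)}, is equivalent to Ψ (same Skolem functions). -/
/- Formalization of DQBF (dependency quantified Boolean formulas),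
   Skolem-function semantics, abstraction, and clause operations. -/

attribute [local instance] Classical.propDecidable

namespace DQBFPaper
open DQBF

/-- Universal reduction preserves equivalence: for a DQBF with CNF
matrix `φ` consisting of non-tautological clauses, applying universal reduction
to every clause yields an equivalent DQBF (same Skolem functions). -/
theorem universal_reduction_equiv {V : Type} (exVars : Set V) (dep : V → Set V)
    (φ : Set (Clause V)) (hnt : ∀ C ∈ φ, NonTaut C)
    (hwf : (mkCNF exVars dep φ).WellFormed) :
    (mkCNF exVars dep φ).Equivalent
      (mkCNF exVars dep ((mkCNF exVars dep φ).urClause '' φ)) := by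
  classical
  set Ψ := mkCNF exVars dep φ with hΨ
  intro s
  constructor
  · rintro ⟨hres, hmat⟩
    refine ⟨hres, ?_⟩
    intro a C' hC'
    obtain ⟨C, hC, rfl⟩ := hC'
    -- the "removal" predicate on variables
    set P : V → Prop :=
      fun v => v ∉ exVars ∧ ∀ k ∈ C, k.1 ∈ exVars → v ∉ dep k.1 with hP
    -- flipped assignment
    set a' : Assignment V :=
      fun v => if h : ∃ b, ((v, b) ∈ C ∧ P v) then !h.choose else a v with ha'
    have ha'neg : ∀ v, ¬(∃ b, ((v, b) ∈ C ∧ P v)) → a' v = a v := by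
      intro v hv
      simp only [ha']
      exact dif_neg hv
    obtain ⟨m, hmC, hmeval⟩ := hmat a' C hC
    have hm' : (m.1, m.2) ∈ C := by simpa using hmC
    by_cases hPm : P m.1
    · -- m was a removed literal: its value under a' is false, contradiction
      exfalso
      have hEx : ∃ b, ((m.1, b) ∈ C ∧ P m.1) := ⟨m.2, hm', hPm⟩
      have hchoose := hEx.choose_spec
      have hbeq : hEx.choose = m.2 := by
        by_contra hne
        have hboth : (m.1, true) ∈ C ∧ (m.1, false) ∈ C := by
          cases hb : hEx.choose <;> cases hb2 : m.2
          · exact absurd (hb.trans hb2.symm) hne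
          · exact ⟨by simpa only [hb2] using hm', by simpa only [hb] using hchoose.1⟩
          · exact ⟨by simpa only [hb] using hchoose.1, by simpa only [hb2] using hm'⟩
          · exact absurd (hb.trans hb2.symm) hne
        exact hnt C hC m.1 hboth
      have hsub : Ψ.subst s a' m.1 = a' m.1 := by
        simp [DQBF.subst, hΨ, mkCNF, hPm.1]
      have ha'm : a' m.1 = !m.2 := by
        simp only [ha']
        rw [dif_pos hEx, hbeq]
      rw [Lit.eval, hsub, ha'm] at hmeval
      cases h2 : m.2 <;> simp [h2] at hmeval
    · -- m survives reduction and has the same value under a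
      refine ⟨m, ?_, ?_⟩
      · exact ⟨hmC, by simpa [DQBF.urClause, hΨ, mkCNF, hP] using hPm⟩
      · have hval : Ψ.subst s a m.1 = Ψ.subst s a' m.1 := by
          by_cases hex : m.1 ∈ exVars
          · have : s m.1 a = s m.1 a' := by
              refine hres m.1 hex a a' ?_
              intro x hx
              refine (ha'neg x ?_).symm
              rintro ⟨b, -, hPx⟩
              exact hPx.2 m hmC hex hx
            simp [DQBF.subst, hΨ, mkCNF, hex, this]
          · have : a m.1 = a' m.1 := by
              refine (ha'neg m.1 ?_).symm
              rintro ⟨b, -, hPx⟩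
              exact hPm hPx
            simp [DQBF.subst, hΨ, mkCNF, hex, this]
        show Lit.eval (Ψ.subst s a) m = true
        rw [Lit.eval, hval, ← Lit.eval, hmeval]
  · rintro ⟨hres, hmat⟩
    refine ⟨hres, ?_⟩
    intro a C hC
    obtain ⟨l, hl, hev⟩ := hmat a _ ⟨C, hC, rfl⟩
    exact ⟨l, hl.1, hev⟩

end DQBFPaper
end

section
/- Soundness of adding clauses with empty dependency set derived by conflict: let Ψ = Π : φ be a DQBF and C a compatible clause with dep(C) = ∅ (i.e., C contains only existential variables with empty dependency sets). If Π : φ ∧ ¬C is unsatisfiable, then Π : φ ≡ Π : φ ∧ C. -/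
/- Formalization of DQBF (dependency quantified Boolean formulas),
   Skolem-function semantics, abstraction, and clause operations. -/

attribute [local instance] Classical.propDecidable

namespace DQBFPaper
open DQBF

/-- If `C` is a compatible clause with `dep(C) = ∅` (all its
variables are existential with empty dependency sets) and `Π : φ ∧ ¬C` is
unsatisfiable, then `Π : φ ≡ Π : φ ∧ C`. -/
theorem add_clause_empty_dep {V : Type} (Ψ : DQBF V) (C : Clause V)
    (hdep : Ψ.depClause C = ∅)
    (h : ¬ (Ψ.addNegClause C).Satisfiable) :
    Ψ.Equivalent (Ψ.addClause C) := by
  have key : ∀ l ∈ C, l.1 ∈ Ψ.exVars ∧ Ψ.dep l.1 = ∅ := by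
    intro l hl
    have hv : Ψ.depVar l.1 = ∅ := by
      have hsub : Ψ.depLit l ⊆ Ψ.depClause C := by
        intro x hx
        exact Set.mem_biUnion hl hx
      rw [hdep] at hsub
      exact Set.eq_empty_iff_forall_notMem.2 fun x hx => hsub hx
    by_cases hx : l.1 ∈ Ψ.exVars
    · exact ⟨hx, by simpa [DQBF.depVar, hx] using hv⟩
    · exfalso
      rw [DQBF.depVar, if_neg hx] at hv
      exact Set.singleton_ne_empty l.1 hv
  intro s
  constructor
  · intro hs
    refine ⟨hs.1, fun a => ⟨hs.2 a, ?_⟩⟩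
    by_contra hC
    apply h
    refine ⟨s, hs.1, fun b => ⟨hs.2 b, fun l hl => ?_⟩⟩
    obtain ⟨hx, hd⟩ := key l hl
    have hsv : s l.1 b = s l.1 a :=
      hs.1 l.1 hx b a (fun x hxx => by rw [hd] at hxx; exact absurd hxx (Set.notMem_empty x))
    have heq : Lit.eval (Ψ.subst s b) l = Lit.eval (Ψ.subst s a) l := by
      simp [Lit.eval, DQBF.subst, hx, hsv]
    have heq2 : Lit.eval ((Ψ.addNegClause C).subst s b) l = Lit.eval (Ψ.subst s a) l := heq
    rw [heq2]
    by_contra h'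
    exact hC ⟨l, hl, (have h'' : Lit.eval (Ψ.subst s a) l = true := by simpa using h'
      h'')⟩
  · intro hs
    exact ⟨hs.1, fun a => (hs.2 a).1⟩

end DQBFPaper
end

section
/- Clause addition via abstraction: let Ψ = Π : φ be a DQBF, C a compatible clause, and V' = dep(C). If abs(Π : φ ∧ ¬C, V') is unsatisfiable, then abs(Π : φ, V') ≡ abs(Π : φ ∧ C, V'), and consequently Π : φ ≡ Π : φ ∧ C. -/
/- Formalization of DQBF (dependency quantified Boolean formulas),
   Skolem-function semantics, abstraction, and clause operations. -/

attribute [local instance] Classical.propDecidable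

namespace DQBFPaper
open DQBF

/-
A Skolem function of `Φ` gives every variable of empty dependency set a constant value, so if
it falsified a clause `C` built from such variables at one assignment, it would falsify `C`
everywhere and hence be a Skolem function of `Φ ∧ ¬C`. Abstracting `dep(C)` makes all
variables of `C` of this kind, which gives the equivalence of the abstractions. To descend to
`Ψ`, fix the values `c` of the abstracted universal variables: a Skolem function of `Ψ`
restricted to `c` is a Skolem function of the abstraction, and its substitution at `c`
coincides with the original one.
-/

namespace DQBF

variable {V : Type}

lemma lit_eval_congr {a b : Assignment V} {l : Lit V} (h : a l.1 = b l.1) :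
    Lit.eval a l = Lit.eval b l := by
  simp [Lit.eval, h]

lemma isSkolem_addClause_iff {Φ : DQBF V} {C : Clause V} {s : V → Assignment V → Bool} :
    (Φ.addClause C).IsSkolem s ↔ Φ.IsSkolem s ∧ ∀ a, Clause.eval (Φ.subst s a) C :=
  ⟨fun ⟨hr, hm⟩ => ⟨⟨hr, fun a => (hm a).1⟩, fun a => (hm a).2⟩,
    fun ⟨⟨hr, hm⟩, hc⟩ => ⟨hr, fun a => ⟨hm a, hc a⟩⟩⟩

lemma equivalent_addClause_of_forall_clause_eval {Φ : DQBF V} {C : Clause V}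
    (h : ∀ s, Φ.IsSkolem s → ∀ a, Clause.eval (Φ.subst s a) C) :
    Φ.Equivalent (Φ.addClause C) := fun s =>
  ⟨fun hs => isSkolem_addClause_iff.2 ⟨hs, h s hs⟩, fun hs => (isSkolem_addClause_iff.1 hs).1⟩

lemma Respects.subst_eq_of_dep_eq_empty {Φ : DQBF V} {s : V → Assignment V → Bool}
    (hs : Φ.Respects s) {v : V} (hv : v ∈ Φ.exVars) (hdep : Φ.dep v = ∅)
    (a b : Assignment V) : Φ.subst s a v = Φ.subst s b v := by
  simp only [subst, if_pos hv]
  exact hs v hv a b (by simp [hdep])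

lemma equivalent_addClause_of_dep_eq_empty {Φ : DQBF V} {C : Clause V}
    (hC : ∀ l ∈ C, l.1 ∈ Φ.exVars ∧ Φ.dep l.1 = ∅)
    (h : ¬ (Φ.addNegClause C).Satisfiable) :
    Φ.Equivalent (Φ.addClause C) := by
  refine equivalent_addClause_of_forall_clause_eval fun s hs a => ?_
  by_contra hfalse
  refine h ⟨s, hs.1, fun b => ⟨hs.2 b, fun l hl => ?_⟩⟩
  have hconst : Φ.subst s b l.1 = Φ.subst s a l.1 :=
    hs.1.subst_eq_of_dep_eq_empty (hC l hl).1 (hC l hl).2 b a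
  change Lit.eval (Φ.subst s b) l = false
  rw [lit_eval_congr hconst]
  simpa using fun htrue => hfalse ⟨l, hl, htrue⟩

lemma depVar_subset_depClause {Ψ : DQBF V} {C : Clause V} {l : Lit V} (hl : l ∈ C) :
    Ψ.depVar l.1 ⊆ Ψ.depClause C :=
  Set.subset_biUnion_of_mem (u := Ψ.depLit) hl

lemma depClause_subset_compl_exVars {Ψ : DQBF V} (hwf : Ψ.WellFormed) (C : Clause V) :
    Ψ.depClause C ⊆ Ψ.exVarsᶜ := by
  simp only [depClause, depLit, depVar, Set.iUnion_subset_iff]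
  intro l _
  split_ifs with hex
  · exact hwf _ hex
  · exact Set.singleton_subset_iff.2 hex

lemma abst_depClause_dep_eq_empty (Ψ : DQBF V) {C : Clause V} {l : Lit V} (hl : l ∈ C) :
    l.1 ∈ (Ψ.abst (Ψ.depClause C)).exVars ∧ (Ψ.abst (Ψ.depClause C)).dep l.1 = ∅ := by
  have hsub := depVar_subset_depClause (Ψ := Ψ) hl
  by_cases hex : l.1 ∈ Ψ.exVars
  · rw [depVar, if_pos hex] at hsub
    refine ⟨Or.inl hex, ?_⟩
    simp only [abst]
    split_ifs
    · rfl
    · exact Set.sdiff_eq_empty.2 hsub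
  · rw [depVar, if_neg hex, Set.singleton_subset_iff] at hsub
    exact ⟨Or.inr hsub, if_pos hsub⟩

noncomputable def restrict (V' : Set V) (c : Assignment V) (s : V → Assignment V → Bool) :
    V → Assignment V → Bool :=
  fun v b => if v ∈ V' then c v else s v (V'.piecewise c b)

variable {Ψ : DQBF V} {V' : Set V} {s : V → Assignment V → Bool}

lemma subst_abst_restrict (hV' : V' ⊆ Ψ.exVarsᶜ) (c b : Assignment V) :
    (Ψ.abst V').subst (restrict V' c s) b = Ψ.subst s (V'.piecewise c b) := by
  funext v
  by_cases hv : v ∈ V'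
  · have hex : v ∉ Ψ.exVars := hV' hv
    simp [subst, abst, restrict, hv, hex]
  · by_cases hex : v ∈ Ψ.exVars <;> simp [subst, abst, restrict, hv, hex]

lemma Respects.abst_restrict (hs : Ψ.Respects s) (c : Assignment V) :
    (Ψ.abst V').Respects (restrict V' c s) := by
  rintro v (hex | hv) a b hab
  · by_cases hv : v ∈ V'
    · simp [restrict, hv]
    · simp only [restrict, if_neg hv]
      refine hs v hex _ _ fun x hx => ?_
      by_cases hx' : x ∈ V'
      · simp [hx']
      · simpa [hx'] using hab x (by simp [abst, hv, hx, hx'])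
  · simp [restrict, hv]

lemma IsSkolem.abst_restrict (hV' : V' ⊆ Ψ.exVarsᶜ) (hs : Ψ.IsSkolem s) (c : Assignment V) :
    (Ψ.abst V').IsSkolem (restrict V' c s) :=
  ⟨hs.1.abst_restrict c, fun b => by rw [subst_abst_restrict hV']; exact hs.2 _⟩

lemma IsSkolem.of_abst {Ψ₁ Ψ₂ : DQBF V} (hex : Ψ₁.exVars = Ψ₂.exVars) (hdep : Ψ₁.dep = Ψ₂.dep)
    (hV' : V' ⊆ Ψ₁.exVarsᶜ) (h : ∀ s, (Ψ₁.abst V').IsSkolem s → (Ψ₂.abst V').IsSkolem s)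
    (hs : Ψ₁.IsSkolem s) : Ψ₂.IsSkolem s := by
  obtain ⟨e, d, m₁⟩ := Ψ₁
  obtain ⟨_, _, m₂⟩ := Ψ₂
  cases hex
  cases hdep
  refine ⟨hs.1, fun a => ?_⟩
  have hmatrix := (h _ (hs.abst_restrict hV' a)).2 a
  rwa [subst_abst_restrict (Ψ := ⟨e, d, m₂⟩) hV', Set.piecewise_same] at hmatrix

lemma Equivalent.of_abst {Ψ₁ Ψ₂ : DQBF V} (hex : Ψ₁.exVars = Ψ₂.exVars)
    (hdep : Ψ₁.dep = Ψ₂.dep) (hV' : V' ⊆ Ψ₁.exVarsᶜ)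
    (h : (Ψ₁.abst V').Equivalent (Ψ₂.abst V')) : Ψ₁.Equivalent Ψ₂ := fun _ =>
  ⟨IsSkolem.of_abst hex hdep hV' fun s => (h s).1,
    IsSkolem.of_abst hex.symm hdep.symm (hex ▸ hV') fun s => (h s).2⟩

end DQBF

/-- Clause addition via abstraction: with `V' = dep(C)`, if
`abs(Π : φ ∧ ¬C, V')` is unsatisfiable, then
`abs(Π : φ, V') ≡ abs(Π : φ ∧ C, V')`, and consequently `Π : φ ≡ Π : φ ∧ C`. -/
theorem add_clause_via_abst {V : Type} (Ψ : DQBF V) (C : Clause V)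
    (hwf : Ψ.WellFormed)
    (h : ¬ ((Ψ.addNegClause C).abst (Ψ.depClause C)).Satisfiable) :
    (Ψ.abst (Ψ.depClause C)).Equivalent
      ((Ψ.addClause C).abst (Ψ.depClause C)) ∧
    Ψ.Equivalent (Ψ.addClause C) := by
  have habst : (Ψ.abst (Ψ.depClause C)).Equivalent ((Ψ.addClause C).abst (Ψ.depClause C)) :=
    equivalent_addClause_of_dep_eq_empty (fun _ hl => Ψ.abst_depClause_dep_eq_empty hl) h
  exact ⟨habst, habst.of_abst rfl rfl (depClause_subset_compl_exVars hwf C)⟩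

end DQBFPaper
end

section
/- Unsoundness of naive clause derivation with universal reduction: for the DQBF Ψ = ∀x₁ ∃y₁({x₁}) : (x₁ ∨ ¬y₁) ∧ (¬x₁ ∨ y₁) and the clause C = {y₁}, the DQBF Π : φ ∧ ¬y₁ is unsatisfiable (a conflict is derived by unit propagation with universal reduction), yet Π : φ is satisfiable (with Skolem function s_{y₁}(x₁) = x₁) while Π : φ ∧ C is unsatisfiable; hence Π : φ ≢ Π : φ ∧ C. -/
/- Formalization of DQBF (dependency quantified Boolean formulas),
   Skolem-function semantics, abstraction, and clause operations. -/

attribute [local instance] Classical.propDecidable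

namespace DQBFPaper
open DQBF

/-- Unsoundness of naive clause derivation with universal
reduction: for `Ψ = ∀x₁ ∃y₁({x₁}) : (x₁ ∨ ¬y₁) ∧ (¬x₁ ∨ y₁)` and `C = {y₁}`,
the DQBF `Π : φ ∧ ¬y₁` is unsatisfiable, yet `Π : φ` is satisfiable (with
Skolem function `s_{y₁}(x₁) = x₁`) while `Π : φ ∧ C` is unsatisfiable; hence
`Π : φ ≢ Π : φ ∧ C`. -/
theorem naive_derivation_unsound :
    let x : Bool := false
    let y : Bool := true
    let Ψ : DQBF Bool :=
      ⟨{y}, fun v => if v = y then {x} else ∅,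
        fun a => Clause.eval a {(x, true), (y, false)} ∧
                 Clause.eval a {(x, false), (y, true)}⟩
    ¬ (Ψ.addNegClause {(y, true)}).Satisfiable ∧
    Ψ.IsSkolem (fun _ a => a x) ∧ Ψ.Satisfiable ∧
    ¬ (Ψ.addClause {(y, true)}).Satisfiable ∧
    ¬ Ψ.Equivalent (Ψ.addClause {(y, true)}) := by
  intro x y Ψ
  have hsx : ∀ (Φ : DQBF Bool), Φ.exVars = {y} →
      ∀ (s : Bool → Assignment Bool → Bool) (a : Assignment Bool),
      Φ.subst s a x = a x := by
    intro Φ hΦ s a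
    simp [DQBF.subst, hΦ, x, y, Set.mem_singleton_iff]
  have hsy : ∀ (Φ : DQBF Bool), Φ.exVars = {y} →
      ∀ (s : Bool → Assignment Bool → Bool) (a : Assignment Bool),
      Φ.subst s a y = s y a := by
    intro Φ hΦ s a
    simp [DQBF.subst, hΦ, y, Set.mem_singleton_iff]
  have hforce : ∀ b : Assignment Bool, Ψ.matrix b → b y = b x := by
    rintro b ⟨⟨l, hl, he⟩, ⟨k, hk, hke⟩⟩
    simp only [Set.mem_insert_iff, Set.mem_singleton_iff] at hl hk
    rcases hl with rfl | rfl <;> rcases hk with rfl | rfl <;>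
      simp_all [Lit.eval]
  have hsk : Ψ.IsSkolem (fun _ a => a x) := by
    constructor
    · intro v hv a b hab
      exact hab x (by simp_all [Ψ, x, y])
    · intro a
      rcases Bool.eq_false_or_eq_true (a x) with h | h
      · exact ⟨⟨(x, true), by simp, by simp [Lit.eval, hsx Ψ rfl, h]⟩,
          ⟨(y, true), by simp, by simp [Lit.eval, hsy Ψ rfl, h]⟩⟩
      · exact ⟨⟨(y, false), by simp, by simp [Lit.eval, hsy Ψ rfl, h]⟩,
          ⟨(x, false), by simp, by simp [Lit.eval, hsx Ψ rfl, h]⟩⟩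
  have hneg : ¬ (Ψ.addNegClause {(y, true)}).Satisfiable := by
    rintro ⟨s, _, hmat⟩
    have h := hmat (fun _ => true)
    set Φ := Ψ.addNegClause {(y, true)} with hΦdef
    have h1 := hforce _ h.1
    have h2 := h.2 (y, true) (by simp)
    rw [hsx Φ rfl, hsy Φ rfl] at h1
    simp [Lit.eval, hsy Φ rfl, h1] at h2
  have hadd : ¬ (Ψ.addClause {(y, true)}).Satisfiable := by
    rintro ⟨s, _, hmat⟩
    have h := hmat (fun _ => false)
    set Φ := Ψ.addClause {(y, true)} with hΦdef
    have h1 := hforce _ h.1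
    rw [hsx Φ rfl, hsy Φ rfl] at h1
    obtain ⟨l, hl, he⟩ := h.2
    simp only [Set.mem_singleton_iff] at hl
    subst hl
    simp [Lit.eval, hsy Φ rfl, h1] at he
  refine ⟨hneg, hsk, ⟨_, hsk⟩, hadd, fun heq => ?_⟩
  exact hadd ⟨_, (heq _).mp hsk⟩

end DQBFPaper
end

section
/- Vivification, clause strengthening case: let Ψ = Π : φ ∧ C be a DQBF with clause C, let C' ⊊ C be a proper subclause, and V' = dep(C'). If abs(Π : φ ∧ ¬C', V') is unsatisfiable, then Ψ ≡ Π : φ ∧ C', i.e., C may be replaced by the shorter clause C'. -/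
/- Formalization of DQBF (dependency quantified Boolean formulas),
   Skolem-function semantics, abstraction, and clause operations. -/

attribute [local instance] Classical.propDecidable

/- `C' ⊆ C` gives one inclusion of Skolem functions. Conversely, let `s` be a
Skolem function of `φ ∧ C` and suppose `C'` fails under `s` at some assignment `a`. The literals
of `C'` only see the variables of `V' = dep(C')`, so `C'` keeps failing when the variables of `V'`
are frozen to their values under `a`. Turning `V'` into constants fixed to `a` and keeping `s`
elsewhere is then a Skolem function of `abs(φ ∧ ¬C', V')`, a contradiction. -/

namespace DQBFPaper

namespace DQBF

variable {V : Type} {Ψ : DQBF V} {s : V → Assignment V → Bool}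

theorem subst_eq_of_eqOn_depVar (hs : Ψ.Respects s) {a b : Assignment V} {v : V}
    (h : ∀ x ∈ Ψ.depVar v, a x = b x) : Ψ.subst s a v = Ψ.subst s b v := by
  unfold depVar at h
  by_cases hv : v ∈ Ψ.exVars
  · simp only [subst, if_pos hv]
    exact hs v hv a b (by simpa only [if_pos hv] using h)
  · simp only [subst, if_neg hv]
    exact h v (by simp only [if_neg hv, Set.mem_singleton_iff])

theorem depLit_subset_depClause {C : Clause V} {l : Lit V} (hl : l ∈ C) :
    Ψ.depLit l ⊆ Ψ.depClause C :=
  Set.subset_biUnion_of_mem (u := Ψ.depLit) hl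

theorem depClause_subset_univVars (hwf : Ψ.WellFormed) (C : Clause V) :
    Ψ.depClause C ⊆ Ψ.univVars := by
  refine Set.iUnion₂_subset fun l _ => ?_
  unfold depLit depVar
  split_ifs with hl
  · exact hwf l.1 hl
  · exact Set.singleton_subset_iff.mpr hl

theorem eval_subst_piecewise_depClause (hs : Ψ.Respects s) {C : Clause V} {l : Lit V}
    (hl : l ∈ C) (a b : Assignment V) :
    Lit.eval (Ψ.subst s ((Ψ.depClause C).piecewise a b)) l = Lit.eval (Ψ.subst s a) l := by
  have hvar : Ψ.subst s ((Ψ.depClause C).piecewise a b) l.1 = Ψ.subst s a l.1 :=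
    subst_eq_of_eqOn_depVar hs fun x hx =>
      Set.piecewise_eq_of_mem _ _ _ (depLit_subset_depClause hl hx)
  simp only [Lit.eval, hvar]

noncomputable def freezeSkolem (V' : Set V) (a : Assignment V) (s : V → Assignment V → Bool) :
    V → Assignment V → Bool :=
  fun v b => if v ∈ V' then a v else s v (V'.piecewise a b)

theorem Respects.abst_freezeSkolem (hs : Ψ.Respects s) (V' : Set V) (a : Assignment V) :
    (Ψ.abst V').Respects (freezeSkolem V' a s) := by
  intro y hy b₁ b₂ hb
  by_cases hyV : y ∈ V'
  · simp only [freezeSkolem, if_pos hyV]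
  · have hyE : y ∈ Ψ.exVars := hy.resolve_right hyV
    simp only [freezeSkolem, if_neg hyV]
    refine hs y hyE _ _ fun x hx => ?_
    by_cases hxV : x ∈ V'
    · simp only [Set.piecewise_eq_of_mem _ _ _ hxV]
    · simp only [Set.piecewise_eq_of_notMem _ _ _ hxV]
      exact hb x (by simp only [abst, if_neg hyV]; exact ⟨hx, hxV⟩)

theorem subst_abst_freezeSkolem {V' : Set V} (hV' : V' ⊆ Ψ.univVars) (a b : Assignment V) :
    (Ψ.abst V').subst (freezeSkolem V' a s) b = Ψ.subst s (V'.piecewise a b) := by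
  funext v
  by_cases hvV : v ∈ V'
  · have hvE : v ∉ Ψ.exVars := hV' hvV
    simp [subst, abst, freezeSkolem, hvV, hvE]
  · simp [subst, abst, freezeSkolem, hvV]

theorem satisfiable_abst_addNegClause_of_not_eval (hwf : Ψ.WellFormed) (hs : Ψ.IsSkolem s)
    {C : Clause V} {a : Assignment V} (ha : ¬ Clause.eval (Ψ.subst s a) C) :
    ((Ψ.addNegClause C).abst (Ψ.depClause C)).Satisfiable := by
  refine ⟨freezeSkolem (Ψ.depClause C) a s, hs.1.abst_freezeSkolem _ a, fun b => ?_⟩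
  rw [subst_abst_freezeSkolem (Ψ := Ψ.addNegClause C) (depClause_subset_univVars hwf C)]
  refine ⟨hs.2 _, fun l hl => ?_⟩
  change Lit.eval (Ψ.subst s ((Ψ.depClause C).piecewise a b)) l = false
  rw [eval_subst_piecewise_depClause hs.1 hl, Bool.eq_false_iff]
  exact fun hl' => ha ⟨l, hl, hl'⟩

theorem IsSkolem.of_addClause {C : Clause V} (hs : (Ψ.addClause C).IsSkolem s) :
    Ψ.IsSkolem s :=
  ⟨hs.1, fun a => (hs.2 a).1⟩

theorem IsSkolem.addClause_mono {C C' : Clause V} (hCC' : C' ⊆ C)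
    (hs : (Ψ.addClause C').IsSkolem s) : (Ψ.addClause C).IsSkolem s :=
  ⟨hs.1, fun a => ⟨(hs.2 a).1, (hs.2 a).2.imp fun _ hl => ⟨hCC' hl.1, hl.2⟩⟩⟩

end DQBF

open DQBF

/-- Vivification, clause-strengthening case: for `Ψ = Π : φ ∧ C`,
a proper subclause `C' ⊊ C`, and `V' = dep(C')`, if `abs(Π : φ ∧ ¬C', V')` is
unsatisfiable, then `Π : φ ∧ C ≡ Π : φ ∧ C'`. -/
theorem vivification {V : Type} (Ψ : DQBF V) (C C' : Clause V)
    (hwf : Ψ.WellFormed) (hss : C' ⊂ C)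
    (h : ¬ ((Ψ.addNegClause C').abst (Ψ.depClause C')).Satisfiable) :
    (Ψ.addClause C).Equivalent (Ψ.addClause C') := by
  intro s
  refine ⟨fun hs => ⟨hs.1, fun a => ⟨(hs.2 a).1, ?_⟩⟩, IsSkolem.addClause_mono hss.subset⟩
  by_contra hC'
  exact h (satisfiable_abst_addNegClause_of_not_eval hwf hs.of_addClause hC')

end DQBFPaper
end

section
/- UPLA, common-implicant case: let Ψ = Π : φ be a DQBF, v a variable, V' = dep(v), and κ a literal such that every Skolem function of abs(Π : φ ∧ v, V') makes κ constantly true and every Skolem function of abs(Π : φ ∧ ¬v, V') makes κ constantly true. Then Ψ ≡ Π : φ ∧ κ. -/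
/- Formalization of DQBF (dependency quantified Boolean formulas),
   Skolem-function semantics, abstraction, and clause operations. -/

attribute [local instance] Classical.propDecidable

namespace DQBFPaper
open DQBF

/-- UPLA, common-implicant case: with `V' = dep(v)`, if every
Skolem function of `abs(Π : φ ∧ v, V')` makes `κ` constantly true and every
Skolem function of `abs(Π : φ ∧ ¬v, V')` makes `κ` constantly true, then
`Ψ ≡ Π : φ ∧ κ`. -/
theorem upla_common_implicant {V : Type} (Ψ : DQBF V) (v : V) (κ : Lit V)
    (hwf : Ψ.WellFormed)
    (h1 : ∀ s, ((Ψ.addClause {(v, true)}).abst (Ψ.depVar v)).IsSkolem s →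
      ((Ψ.addClause {(v, true)}).abst (Ψ.depVar v)).ConstTrue s κ)
    (h0 : ∀ s, ((Ψ.addClause {(v, false)}).abst (Ψ.depVar v)).IsSkolem s →
      ((Ψ.addClause {(v, false)}).abst (Ψ.depVar v)).ConstTrue s κ) :
    Ψ.Equivalent (Ψ.addClause {κ}) := by
  have hdisj : ∀ w ∈ Ψ.depVar v, w ∉ Ψ.exVars := by
    intro w hw
    unfold DQBF.depVar at hw
    split at hw
    · exact fun hwE => hwf v ‹_› hw hwE
    · simp only [Set.mem_singleton_iff] at hw; subst hw; assumption
  have key : ∀ s, Ψ.IsSkolem s → ∀ a, Lit.eval (Ψ.subst s a) κ = true := by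
    intro s hs a
    set V' := Ψ.depVar v with hV'
    set M : Assignment V → Assignment V := fun b x => if x ∈ V' then a x else b x with hM
    set s' : V → Assignment V → Bool := fun y b => if y ∈ V' then a y else s y (M b) with hs'
    set p := (Ψ.subst s a) v with hp
    -- key substitution identity
    have hsubst : ∀ (C : Clause V) (b : Assignment V),
        ((Ψ.addClause C).abst V').subst s' b = Ψ.subst s (M b) := by
      intro C b; funext w
      simp only [DQBF.subst, DQBF.abst, DQBF.addClause, Set.mem_union]
      by_cases hwV : w ∈ V'
      · simp [hwV, hM, hs', hdisj w hwV]
      · by_cases hwE : w ∈ Ψ.exVars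
        · simp [hwV, hwE, hs']
        · simp [hwV, hwE, hM]
    -- M b agrees with a on V'
    have hMag : ∀ b, ∀ x ∈ V', M b x = a x := by
      intro b x hx; simp [hM, hx]
    -- the value of v under Ψ.subst s (M b) is p
    have hv : ∀ b, (Ψ.subst s (M b)) v = p := by
      intro b
      by_cases hvE : v ∈ Ψ.exVars
      · have hVd : V' = Ψ.dep v := by simp [hV', DQBF.depVar, hvE]
        have : s v (M b) = s v a := by
          apply hs.1 v hvE
          intro x hx
          exact hMag b x (hVd ▸ hx)
        simp [DQBF.subst, hvE, this, hp]
      · have hvV : v ∈ V' := by simp [hV', DQBF.depVar, hvE]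
        simp [DQBF.subst, hvE, hp, hMag b v hvV]
    -- s' is a Skolem function of the abstraction of Ψ ∧ (v, p)
    have hsk : ((Ψ.addClause {(v, p)}).abst V').IsSkolem s' := by
      constructor
      · intro y hy b b' hag
        by_cases hyV : y ∈ V'
        · simp [hs', hyV]
        · simp only [hs', if_neg hyV]
          have hyE : y ∈ Ψ.exVars := by
            rcases hy with h | h
            · exact h
            · exact absurd h hyV
          apply hs.1 y hyE
          intro x hx
          by_cases hxV : x ∈ V'
          · simp [hM, hxV]
          · simp only [hM, if_neg hxV]
            apply hag x
            simp only [DQBF.abst, DQBF.addClause, if_neg hyV]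
            exact ⟨hx, hxV⟩
      · intro b
        rw [hsubst]
        refine ⟨hs.2 (M b), ⟨(v, p), rfl, ?_⟩⟩
        have := hv b
        cases hp' : p <;> simp [Lit.eval, this, hp']
    -- apply the hypothesis depending on p
    have hct : ((Ψ.addClause {(v, p)}).abst V').ConstTrue s' κ := by
      cases hp' : p
      · rw [hp'] at hsk; exact h0 s' hsk
      · rw [hp'] at hsk; exact h1 s' hsk
    have := hct a
    rw [hsubst] at this
    have hMa : M a = a := by funext x; simp [hM]
    rwa [hMa] at this
  intro s
  constructor
  · intro hs
    refine ⟨hs.1, fun a => ⟨hs.2 a, ⟨κ, rfl, key s hs a⟩⟩⟩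
  · intro hs
    exact ⟨hs.1, fun a => (hs.2 a).1⟩

end DQBFPaper
end

section
/- UPLA, equivalent-literal case: let Ψ = Π : φ be a DQBF, v a variable, V' = dep(v), and κ a literal such that every Skolem function of abs(Π : φ ∧ v, V') makes κ constantly true, and every Skolem function of abs(Π : φ ∧ ¬v, V') makes ¬κ constantly true. Then Ψ ≡ Π : φ ∧ (v ↔ κ). -/
/- Formalization of DQBF (dependency quantified Boolean formulas),
   Skolem-function semantics, abstraction, and clause operations. -/

attribute [local instance] Classical.propDecidable

namespace DQBFPaper
open DQBF

lemma lit_eval_neg' {V : Type} (a : Assignment V) (l : Lit V) :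
    Lit.eval a (Lit.neg l) = !(Lit.eval a l) := by
  rcases l with ⟨x, p⟩
  cases p <;> simp [Lit.eval, Lit.neg]

lemma upla_key {V : Type} (Ψ : DQBF V) (v : V) (l : Lit V)
    (hwf : Ψ.WellFormed) (s : V → Assignment V → Bool)
    (hs : Ψ.IsSkolem s) (a₀ : Assignment V)
    (c : Bool) (hc : Ψ.subst s a₀ v = c)
    (h : ∀ s', ((Ψ.addClause {(v, c)}).abst (Ψ.depVar v)).IsSkolem s' →
      ((Ψ.addClause {(v, c)}).abst (Ψ.depVar v)).ConstTrue s' l) :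
    Lit.eval (Ψ.subst s a₀) l = true := by
  classical
  obtain ⟨hresp, hmat⟩ := hs
  have hdisj : ∀ x ∈ Ψ.depVar v, x ∉ Ψ.exVars := by
    intro x hx
    unfold DQBF.depVar at hx
    by_cases hv : v ∈ Ψ.exVars
    · simp only [if_pos hv] at hx
      exact hwf v hv hx
    · simp only [if_neg hv, Set.mem_singleton_iff] at hx
      subst hx; exact hv
  set patch : Assignment V → Assignment V :=
    fun a x => if x ∈ Ψ.depVar v then a₀ x else a x with hpatch
  set s' : V → Assignment V → Bool :=
    fun y a => if y ∈ Ψ.depVar v then a₀ y else s y (patch a) with hs'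
  have hpa₀ : patch a₀ = a₀ := by
    funext x; simp only [hpatch]; split <;> rfl
  have hsub : ∀ a, ((Ψ.addClause {(v, c)}).abst (Ψ.depVar v)).subst s' a
      = Ψ.subst s (patch a) := by
    intro a; funext x
    simp only [DQBF.subst, DQBF.abst, DQBF.addClause, Set.mem_union]
    by_cases hxe : x ∈ Ψ.exVars
    · have hxV : x ∉ Ψ.depVar v := fun hh => hdisj x hh hxe
      simp [hxe, hxV, hs']
    · by_cases hxV : x ∈ Ψ.depVar v
      · simp [hxe, hxV, hs', hpatch]
      · simp [hxe, hxV, hs', hpatch]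
  have hvval : ∀ a, Ψ.subst s (patch a) v = c := by
    intro a
    by_cases hv : v ∈ Ψ.exVars
    · have hdep : ∀ x ∈ Ψ.dep v, patch a x = a₀ x := by
        intro x hx
        have : x ∈ Ψ.depVar v := by unfold DQBF.depVar; simp [hv, hx]
        simp [hpatch, this]
      have := hresp v hv (patch a) a₀ hdep
      simp only [DQBF.subst, if_pos hv] at hc ⊢
      rw [this, hc]
    · have hvV : v ∈ Ψ.depVar v := by unfold DQBF.depVar; simp [hv]
      simp only [DQBF.subst, if_neg hv] at hc ⊢
      simp [hpatch, hvV, ← hc]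
  have hskolem : ((Ψ.addClause {(v, c)}).abst (Ψ.depVar v)).IsSkolem s' := by
    constructor
    · intro y hy a b hab
      simp only [DQBF.abst, DQBF.addClause] at hy hab
      by_cases hyV : y ∈ Ψ.depVar v
      · simp [hs', hyV]
      · have hye : y ∈ Ψ.exVars := by
          rcases hy with hy | hy
          · exact hy
          · exact absurd hy hyV
        simp only [if_neg hyV] at hab
        simp only [hs', if_neg hyV]
        apply hresp y hye
        intro x hx
        by_cases hxV : x ∈ Ψ.depVar v
        · simp [hpatch, hxV]
        · have : x ∈ Ψ.dep y \ Ψ.depVar v := ⟨hx, hxV⟩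
          have := hab x this
          simp [hpatch, hxV, this]
    · intro a
      have hm : ((Ψ.addClause {(v, c)}).abst (Ψ.depVar v)).matrix
          = (Ψ.addClause {(v, c)}).matrix := rfl
      rw [hsub a, hm]
      refine ⟨hmat (patch a), ?_⟩
      refine ⟨(v, c), Set.mem_singleton _, ?_⟩
      have := hvval a
      cases c <;> simp [Lit.eval, this]
  have := h s' hskolem a₀
  rw [hsub a₀, hpa₀] at this
  exact this

/-- UPLA, equivalent-literal case: with `V' = dep(v)`, if every
Skolem function of `abs(Π : φ ∧ v, V')` makes `κ` constantly true and every
Skolem function of `abs(Π : φ ∧ ¬v, V')` makes `¬κ` constantly true, then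
`Ψ ≡ Π : φ ∧ (v ↔ κ)`, where `(v ↔ κ)` is the two clauses
`(¬v ∨ κ) ∧ (v ∨ ¬κ)`. -/
theorem upla_equivalent_literal {V : Type} (Ψ : DQBF V) (v : V) (κ : Lit V)
    (hwf : Ψ.WellFormed)
    (h1 : ∀ s, ((Ψ.addClause {(v, true)}).abst (Ψ.depVar v)).IsSkolem s →
      ((Ψ.addClause {(v, true)}).abst (Ψ.depVar v)).ConstTrue s κ)
    (h0 : ∀ s, ((Ψ.addClause {(v, false)}).abst (Ψ.depVar v)).IsSkolem s →
      ((Ψ.addClause {(v, false)}).abst (Ψ.depVar v)).ConstTrue s (Lit.neg κ)) :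
    Ψ.Equivalent
      (((Ψ.addClause {(v, false), κ}).addClause {(v, true), Lit.neg κ})) := by
  intro s
  constructor
  · intro hs
    obtain ⟨hresp, hmat⟩ := hs
    refine ⟨hresp, ?_⟩
    intro a
    set b := Ψ.subst s a with hb
    have hsub : ((Ψ.addClause {(v, false), κ}).addClause
        {(v, true), Lit.neg κ}).subst s a = b := rfl
    show (Ψ.matrix b ∧ Clause.eval b {(v, false), κ}) ∧
        Clause.eval b {(v, true), Lit.neg κ}
    have hskol : Ψ.IsSkolem s := ⟨hresp, hmat⟩
    cases hbv : b v with
    | true =>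
      have hκ : Lit.eval b κ = true :=
        upla_key Ψ v κ hwf s hskol a true hbv h1
      refine ⟨⟨hmat a, ⟨κ, ?_, hκ⟩⟩, ⟨(v, true), ?_, ?_⟩⟩
      · right; rfl
      · left; rfl
      · simp [Lit.eval, hbv]
    | false =>
      have hκ : Lit.eval b (Lit.neg κ) = true :=
        upla_key Ψ v (Lit.neg κ) hwf s hskol a false hbv h0
      refine ⟨⟨hmat a, ⟨(v, false), ?_, ?_⟩⟩, ⟨Lit.neg κ, ?_, hκ⟩⟩
      · left; rfl
      · simp [Lit.eval, hbv]
      · right; rfl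
  · intro hs
    obtain ⟨hresp, hmat⟩ := hs
    exact ⟨hresp, fun a => (hmat a).1.1⟩

end DQBFPaper
end

section
/- DQIOR redundancy, existential pivot: let Π : φ be a DQBF, C a compatible clause, and ℓ ∈ C an existential literal such that for every clause D ∈ φ with ¬ℓ ∈ D, the outer resolvent OR(Π, C, D, ℓ) = C ∪ (OC(Π, D, ¬ℓ) \ {¬ℓ}) is implied by Π : φ (every Skolem function of Π : φ is a Skolem function of Π : φ ∧ OR(Π, C, D, ℓ)). Then Π : φ and Π : φ ∧ C are equi-satisfiable. -/
/- Formalization of DQBF (dependency quantified Boolean formulas),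
   Skolem-function semantics, abstraction, and clause operations. -/

attribute [local instance] Classical.propDecidable

namespace DQBFPaper
open DQBF

lemma lit_eval_true_iff {V : Type} (a : Assignment V) (k : Lit V) :
    Lit.eval a k = true ↔ a k.1 = k.2 := by
  rw [Lit.eval]; cases hb : k.2 <;> simp [hb]

lemma lit_eval_false_iff {V : Type} (a : Assignment V) (k : Lit V) :
    Lit.eval a k = false ↔ a k.1 = !k.2 := by
  rw [Lit.eval]; cases hb : k.2 <;> simp [hb]

/-- DQIOR redundancy, existential pivot: if `ℓ ∈ C` is an
existential literal and for every clause `D ∈ φ` with `¬ℓ ∈ D` the outer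
resolvent `OR(Π, C, D, ℓ) = C ∪ (OC(Π, D, ¬ℓ) \ {¬ℓ})` is implied by `Π : φ`
(every Skolem function of `Π : φ` is one of `Π : φ ∧ OR`), then `Π : φ` and
`Π : φ ∧ C` are equi-satisfiable. -/
theorem dqior_existential {V : Type} (Ψ : DQBF V) (φ : Set (Clause V))
    (hmat : Ψ.matrix = fun a => ∀ D ∈ φ, Clause.eval a D)
    (hwf : Ψ.WellFormed) (C : Clause V) (l : Lit V)
    (hl : l ∈ C) (hex : l.1 ∈ Ψ.exVars)
    (h : ∀ D ∈ φ, Lit.neg l ∈ D →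
      ∀ s, Ψ.IsSkolem s → (Ψ.addClause (Ψ.orEx C D l)).IsSkolem s) :
    Ψ.EquiSat (Ψ.addClause C) := by
  classical
  constructor
  · rintro ⟨s, hresp, hsat⟩
    have hsat' : ∀ a, ∀ D ∈ φ, Clause.eval (Ψ.subst s a) D := by
      intro a
      have := hsat a
      rw [hmat] at this
      exact this
    set P : Assignment V → Prop := fun a => ∃ a' : Assignment V,
      (∀ x ∈ Ψ.dep l.1, a' x = a x) ∧
        ∀ k ∈ C, k ≠ l → Lit.eval (Ψ.subst s a') k = false with hP
    set s' : V → Assignment V → Bool := fun y a =>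
      if y = l.1 then (if P a then l.2 else s y a) else s y a with hs'
    -- basic facts
    have hsub_ne : ∀ (a : Assignment V) (x : V), x ≠ l.1 →
        Ψ.subst s' a x = Ψ.subst s a x := by
      intro a x hx
      simp [DQBF.subst, hs', hx]
    have hsubv : ∀ a : Assignment V,
        Ψ.subst s' a l.1 = if P a then l.2 else s l.1 a := by
      intro a
      simp [DQBF.subst, hs', hex]
    have hsubs : ∀ a : Assignment V, Ψ.subst s a l.1 = s l.1 a := by
      intro a
      simp [DQBF.subst, hex]
    have heq_of_notP : ∀ a : Assignment V, ¬ P a → Ψ.subst s' a = Ψ.subst s a := by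
      intro a hPa
      funext x
      by_cases hx : x = l.1
      · subst hx
        rw [hsubv a, if_neg hPa, hsubs a]
      · exact hsub_ne a x hx
    have heq_of_eq : ∀ a : Assignment V, s l.1 a = l.2 → Ψ.subst s' a = Ψ.subst s a := by
      intro a hsv
      funext x
      by_cases hx : x = l.1
      · subst hx
        rw [hsubv a, hsubs a]
        by_cases hPa : P a
        · rw [if_pos hPa, hsv]
        · rw [if_neg hPa]
      · exact hsub_ne a x hx
    -- outer literals evaluate equally on assignments agreeing on dep l.1
    have houter : ∀ (a a' : Assignment V), (∀ x ∈ Ψ.dep l.1, a' x = a x) →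
        ∀ w ∈ Ψ.ovEx l.1, Ψ.subst s a' w = Ψ.subst s a w := by
      intro a a' hag w hw
      have hdv : Ψ.depVar l.1 = Ψ.dep l.1 := by simp [DQBF.depVar, hex]
      rw [DQBF.ovEx, Set.mem_setOf_eq, hdv] at hw
      by_cases hwe : w ∈ Ψ.exVars
      · have hdw : Ψ.depVar w = Ψ.dep w := by simp [DQBF.depVar, hwe]
        rw [hdw] at hw
        simp only [DQBF.subst, if_pos hwe]
        exact hresp w hwe a' a (fun x hx => hag x (hw hx))
      · have hdw : Ψ.depVar w = {w} := by simp [DQBF.depVar, hwe]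
        rw [hdw] at hw
        simp only [DQBF.subst, if_neg hwe]
        exact hag w (hw rfl)
    -- s' respects dependencies
    have hresp' : Ψ.Respects s' := by
      intro y hy a b hab
      simp only [hs']
      by_cases hy1 : y = l.1
      · subst hy1
        have hPiff : P a ↔ P b := by
          simp only [hP]
          constructor
          · rintro ⟨a', h1, h2⟩
            exact ⟨a', fun x hx => (h1 x hx).trans (hab x hx), h2⟩
          · rintro ⟨a', h1, h2⟩
            exact ⟨a', fun x hx => (h1 x hx).trans (hab x hx).symm, h2⟩
        by_cases hPa : P a
        · rw [if_pos rfl, if_pos rfl, if_pos hPa, if_pos (hPiff.mp hPa)]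
        · rw [if_pos rfl, if_pos rfl, if_neg hPa, if_neg (fun hb => hPa (hPiff.mpr hb))]
          exact hresp _ hy a b hab
      · rw [if_neg hy1, if_neg hy1]
        exact hresp y hy a b hab
    -- C is always satisfied by s'
    have hCtrue : ∀ a, Clause.eval (Ψ.subst s' a) C := by
      intro a
      by_cases hPa : P a
      · refine ⟨l, hl, ?_⟩
        rw [lit_eval_true_iff, hsubv a, if_pos hPa]
      · have hPa' := hPa
        simp only [hP] at hPa'
        push_neg at hPa'
        obtain ⟨k, hkC, hkl, hkev⟩ := hPa' a (fun x _ => rfl)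
        refine ⟨k, hkC, ?_⟩
        rw [heq_of_notP a hPa]
        exact eq_true_of_ne_false hkev
    -- every clause of φ is satisfied by s'
    have hD : ∀ a, ∀ D ∈ φ, Clause.eval (Ψ.subst s' a) D := by
      intro a D hDφ
      by_cases hPa : P a
      · by_cases hsv : s l.1 a = l.2
        · rw [heq_of_eq a hsv]
          exact hsat' a D hDφ
        · have hsv' : s l.1 a = !l.2 := Bool.eq_not_iff.mpr hsv
          by_cases hln : Lit.neg l ∈ D
          · -- use the outer resolvent hypothesis
            have hPa' := hPa
            simp only [hP] at hPa'
            obtain ⟨a', hag, hfalse⟩ := hPa'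
            have hsa' : s l.1 a' = !l.2 := by
              rw [hresp l.1 hex a' a hag]; exact hsv'
            have horEx := h D hDφ hln s ⟨hresp, hsat⟩
            have hreso : Clause.eval (Ψ.subst s a') (Ψ.orEx C D l) := (horEx.2 a').2
            obtain ⟨k, hk, hkev⟩ := hreso
            -- every literal on the pivot variable other than ¬l is false at a'
            have hevl : ∀ m : Lit V, m.1 = l.1 → m ≠ Lit.neg l →
                Lit.eval (Ψ.subst s a') m = false := by
              intro m hm1 hmne
              have hm2 : m.2 = l.2 := by
                by_contra hm2
                exact hmne (Prod.ext hm1 (Bool.eq_not_iff.mpr hm2))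
              rw [lit_eval_false_iff, hm1, hsubs a', hsa', hm2]
            rcases hk with hkC | ⟨hkD, hknotneg⟩
            · -- k ∈ C : contradiction
              by_cases hkl : k = l
              · have hne : k ≠ Lit.neg l := by
                  rw [hkl]
                  intro hkn
                  have h2 : l.2 = !l.2 := congrArg Prod.snd hkn
                  simp at h2
                rw [hevl k (by rw [hkl]) hne] at hkev
                exact absurd hkev (by simp)
              · rw [hfalse k hkC hkl] at hkev
                exact absurd hkev (by simp)
            · -- k ∈ OC D (ovEx l.1) \ {Lit.neg l}
              obtain ⟨hkD', hkov⟩ := hkD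
              have hkne : k ≠ Lit.neg l := by simpa using hknotneg
              by_cases hk1 : k.1 = l.1
              · rw [hevl k hk1 hkne] at hkev
                exact absurd hkev (by simp)
              · refine ⟨k, hkD', ?_⟩
                have h1 : Ψ.subst s a' k.1 = Ψ.subst s a k.1 := houter a a' hag k.1 hkov
                have h2 : Ψ.subst s' a k.1 = Ψ.subst s a k.1 := hsub_ne a k.1 hk1
                rw [lit_eval_true_iff] at hkev ⊢
                rw [h2, ← h1]
                exact hkev
          · -- Lit.neg l ∉ D : the old witness still works
            obtain ⟨k, hkD, hkev⟩ := hsat' a D hDφ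
            by_cases hk1 : k.1 = l.1
            · exfalso
              have hsubk : Ψ.subst s a k.1 = !l.2 := by
                rw [hk1, hsubs a, hsv']
              have hk2 : k.2 = !l.2 := by
                rw [lit_eval_true_iff, hsubk] at hkev
                exact hkev.symm
              apply hln
              have hkeq : k = Lit.neg l := by
                have hnl : Lit.neg l = (l.1, !l.2) := rfl
                rw [hnl]
                exact Prod.ext hk1 hk2
              rw [← hkeq]
              exact hkD
            · refine ⟨k, hkD, ?_⟩
              rw [lit_eval_true_iff] at hkev ⊢
              rw [hsub_ne a k.1 hk1]
              exact hkev
      · rw [heq_of_notP a hPa]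
        exact hsat' a D hDφ
    refine ⟨s', hresp', ?_⟩
    intro a
    show Ψ.matrix (Ψ.subst s' a) ∧ Clause.eval (Ψ.subst s' a) C
    refine ⟨?_, hCtrue a⟩
    rw [hmat]
    exact hD a
  · rintro ⟨s, hr, hm⟩
    exact ⟨s, hr, fun a => (hm a).1⟩

end DQBFPaper
end
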